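/- arXiv:2308.12809 — 5 statements merged into one kernel-verified Lean document; each statement's English description precedes it below -/
import Mathlib

section
/- For the Krawtchouk polynomial K_n(x;p,N) = ₂F₁(-n, -x; -N; 1/p) with natural numbers n, x, N such that n, x ≤ N, the expression p^{(x+n)/2} · binom(N,n) · Σ_{k=0}^{min(n,x)} [(-n)_k (-x)_k / ((-N)_k k!)] p^{-k}, viewed as a function of real p > 0, tends to (-1)^x if x = n and to 0 if x ≠ n, as p → 0⁺, i.e. its limit is (-1)^x · δ_{x,n}. -/
open Finset Filter Topology

/-- Pochhammer (rising factorial) symbol. -/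
noncomputable def poch (a : ℝ) (k : ℕ) : ℝ := ∏ i ∈ Finset.range k, (a + i)

lemma poch_neg_nat (m k : ℕ) :
    poch (-(m : ℝ)) k = (-1 : ℝ) ^ k * (m.descFactorial k : ℝ) := by
  induction k with
  | zero => simp [poch]
  | succ k ih =>
    have : poch (-(m : ℝ)) (k + 1) = poch (-(m : ℝ)) k * (-(m : ℝ) + k) := by
      simp [poch, Finset.prod_range_succ]
    rw [this, ih, Nat.descFactorial_succ]
    rcases le_or_gt k m with h | h
    · push_cast [Nat.cast_sub h]
      ring
    · have : m.descFactorial k = 0 := Nat.descFactorial_eq_zero_iff_lt.mpr h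
      simp [this]

/-- Limit at `p → 0⁺` of `p^{(x+n)/2} · binom(N,n) · K_n(x;p,N)`. -/
theorem krawtchouk_limit_p_zero (n x N : ℕ) (hn : n ≤ N) (hx : x ≤ N) :
    Tendsto
      (fun p : ℝ =>
        p ^ (((x : ℝ) + n) / 2) * (N.choose n : ℝ) *
          ∑ k ∈ Finset.range (min n x + 1),
            poch (-(n : ℝ)) k * poch (-(x : ℝ)) k /
              (poch (-(N : ℝ)) k * (Nat.factorial k : ℝ)) * p ^ (-(k : ℝ)))
      (nhdsWithin 0 (Set.Ioi 0))
      (nhds (if x = n then (-1 : ℝ) ^ x else 0)) := by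
  set a : ℝ := ((x : ℝ) + n) / 2 with ha
  set C : ℕ → ℝ := fun k =>
    (N.choose n : ℝ) * (poch (-(n : ℝ)) k * poch (-(x : ℝ)) k /
      (poch (-(N : ℝ)) k * (Nat.factorial k : ℝ))) with hC
  set L : ℕ → ℝ := fun k => if x = n ∧ k = n then (-1 : ℝ) ^ x else 0 with hL
  have hEq : (fun p : ℝ =>
      p ^ a * (N.choose n : ℝ) *
        ∑ k ∈ Finset.range (min n x + 1),
          poch (-(n : ℝ)) k * poch (-(x : ℝ)) k /
            (poch (-(N : ℝ)) k * (Nat.factorial k : ℝ)) * p ^ (-(k : ℝ)))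
      =ᶠ[nhdsWithin (0 : ℝ) (Set.Ioi 0)]
      (fun p : ℝ => ∑ k ∈ Finset.range (min n x + 1), C k * p ^ (a - (k : ℝ))) := by
    filter_upwards [self_mem_nhdsWithin] with p hp
    have hp' : (0 : ℝ) < p := hp
    rw [mul_assoc, Finset.mul_sum, Finset.mul_sum]
    refine Finset.sum_congr rfl fun k _ => ?_
    have : p ^ (a - (k : ℝ)) = p ^ a * p ^ (-(k : ℝ)) := by
      rw [← Real.rpow_add hp']; ring_nf
    rw [this, hC]
    ring
  refine Tendsto.congr' hEq.symm ?_
  have hsumL : (∑ k ∈ Finset.range (min n x + 1), L k)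
      = (if x = n then (-1 : ℝ) ^ x else 0) := by
    by_cases hxn : x = n
    · subst hxn
      simp only [min_self, hL, true_and, if_true]
      rw [Finset.sum_ite_eq' (Finset.range (x + 1)) x (fun _ => (-1 : ℝ) ^ x)]
      simp [Finset.mem_range]
    · have : ∀ k ∈ Finset.range (min n x + 1), L k = 0 := by
        intro k _; simp [hL, hxn]
      rw [Finset.sum_congr rfl this]
      simp [hxn]
  rw [← hsumL]
  refine tendsto_finset_sum _ fun k hk => ?_
  have hk' : k ≤ min n x := Nat.lt_succ_iff.mp (Finset.mem_range.mp hk)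
  by_cases hcase : x = n ∧ k = n
  · obtain ⟨hxn, hkn⟩ := hcase
    subst hxn; subst hkn
    have hae : a - (k : ℝ) = 0 := by rw [ha]; ring
    have hCk : C k = (-1 : ℝ) ^ k := by
      rw [hC]
      simp only [poch_neg_nat]
      have h1 : (k.descFactorial k : ℝ) = (k.factorial : ℝ) := by
        rw [Nat.descFactorial_self]
      have h2 : (N.descFactorial k : ℝ) = (k.factorial : ℝ) * (N.choose k : ℝ) := by
        exact_mod_cast congrArg Nat.cast (Nat.descFactorial_eq_factorial_mul_choose N k)
      have hch : (N.choose k : ℝ) ≠ 0 := by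
        exact_mod_cast Nat.choose_pos hn |>.ne'
      have hf : (k.factorial : ℝ) ≠ 0 := by exact_mod_cast k.factorial_ne_zero
      rw [h1, h2]
      field_simp
    have : (fun p : ℝ => C k * p ^ (a - (k : ℝ))) = fun _ => (-1 : ℝ) ^ k := by
      funext p; rw [hae, Real.rpow_zero, hCk, mul_one]
    rw [this]
    have : L k = (-1 : ℝ) ^ k := by simp [hL]
    rw [this]
    exact tendsto_const_nhds
  · have he : 0 < a - (k : ℝ) := by
      rw [ha]
      by_cases hxn : x = n
      · subst hxn
        have hkx : k ≠ x := fun h => hcase ⟨rfl, h⟩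
        have : k < x := lt_of_le_of_ne (by simpa using hk') hkx
        have : (k : ℝ) < x := by exact_mod_cast this
        linarith
      · have h2 : 2 * min n x < x + n := by
          rcases lt_or_gt_of_ne hxn with h | h
          · rw [min_eq_right h.le]; omega
          · rw [min_eq_left h.le]; omega
        have : (k : ℝ) ≤ min n x := by exact_mod_cast hk'
        have : (2 * min n x : ℝ) < (x : ℝ) + n := by exact_mod_cast h2
        linarith
    have hL0 : L k = 0 := by simp [hL, hcase]
    rw [hL0]
    have htends : Tendsto (fun p : ℝ => p ^ (a - (k : ℝ)))
        (nhdsWithin 0 (Set.Ioi 0)) (nhds 0) := by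
      have := (Real.continuousAt_rpow_const 0 (a - (k : ℝ)) (Or.inr he.le)).continuousWithinAt
        (s := Set.Ioi 0)
      simpa [Real.zero_rpow he.ne'] using this.tendsto
    simpa using htends.const_mul (C k)
end

section
/- Krawtchouk polynomials satisfy the orthogonality relation: for natural numbers m, n, N with m, n ≤ N and real 0 < p < 1, binom(N,n) · Σ_{X=0}^{N} binom(N,X) p^{X+n} (1-p)^{N-X-n} K_m(X;p,N) K_n(X;p,N) = δ_{m,n}, where K_n(x;p,N) = Σ_{k=0}^{n} [(-n)_k (-x)_k / ((-N)_k k!)] p^{-k}. -/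
/-!
The Krawtchouk polynomials have the generating function
`∑ₙ C(N,n) Kₙ(x) tⁿ = (1 - (1-p)/p · t)ˣ (1 + t)^(N-x)`. Averaging the product of two such
generating functions against the binomial weights `C(N,x) pˣ (1-p)^(N-x)`, the binomial theorem
gives `(1 + (1-p)/p · st)^N`, a function of `st` alone; comparing the coefficients of `sᵐ tⁿ`
gives orthogonality, with squared norm `((1-p)/p)ⁿ / C(N,n)`.
-/

open Finset

/-- The Krawtchouk polynomial `K_n(x;p,N) = ₂F₁(-n,-x;-N;1/p)`. -/
noncomputable def kraw (n x N : ℕ) (p : ℝ) : ℝ :=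
  ∑ k ∈ Finset.range (n + 1),
    poch (-(n : ℝ)) k * poch (-(x : ℝ)) k /
      (poch (-(N : ℝ)) k * (Nat.factorial k : ℝ)) * (1 / p) ^ k

open Polynomial
open scoped Nat

theorem sum_coeff_mul_coeff_of_eval_mul {R ι : Type*} [CommRing R] [IsDomain R] [Infinite R]
    (S : Finset ι) (f g : ι → R[X]) (h : R[X])
    (hfg : ∀ s t, ∑ i ∈ S, (f i).eval s * (g i).eval t = h.eval (s * t)) (m n : ℕ) :
    ∑ i ∈ S, (f i).coeff m * (g i).coeff n = if m = n then h.coeff n else 0 := by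
  have hcoeff_g : ∀ s, ∑ i ∈ S, (f i).eval s * (g i).coeff n = h.coeff n * s ^ n := by
    intro s
    have hpoly : ∑ i ∈ S, C ((f i).eval s) * g i = h.comp (C s * X) :=
      funext fun t => by simp [eval_finsetSum, hfg]
    simpa [finsetSum_coeff, coeff_C_mul] using congrArg (coeff · n) hpoly
  have hpoly : ∑ i ∈ S, C ((g i).coeff n) * f i = C (h.coeff n) * X ^ n :=
    funext fun s => by
      simp only [eval_finsetSum, eval_mul, eval_C, eval_pow, eval_X, ← hcoeff_g s]
      exact sum_congr rfl fun i _ => mul_comm _ _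
  have hm := congrArg (coeff · m) hpoly
  simp only [finsetSum_coeff, coeff_C_mul, coeff_X_pow, mul_ite, mul_one, mul_zero] at hm
  rw [← hm]
  exact sum_congr rfl fun i _ => mul_comm _ _

theorem poch_neg_natCast (a k : ℕ) : poch (-(a : ℝ)) k = (-1) ^ k * k ! * a.choose k := by
  have h : poch (-(a : ℝ)) k = (-1) ^ k * (descPochhammer ℝ k).eval (a : ℝ) := by
    have hneg := prod_neg (s := range k) (f := fun i : ℕ => (a : ℝ) - i)
    rw [card_range] at hneg
    rw [poch, descPochhammer_eval_eq_prod_range, ← hneg]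
    exact prod_congr rfl fun i _ => by ring
  rw [h, descPochhammer_eval_eq_descFactorial, Nat.descFactorial_eq_factorial_mul_choose]
  push_cast
  ring

theorem choose_mul_kraw {n N : ℕ} (x : ℕ) (p : ℝ) (hn : n ≤ N) :
    N.choose n * kraw n x N p =
      ∑ k ∈ range (n + 1), x.choose k * (-p⁻¹) ^ k * (N - k).choose (n - k) := by
  rw [kraw, mul_sum]
  refine sum_congr rfl fun k hk => ?_
  have hkn : k ≤ n := Nat.lt_succ_iff.mp (mem_range.mp hk)
  have hNk : (N.choose k : ℝ) ≠ 0 := by exact_mod_cast (Nat.choose_pos (hkn.trans hn)).ne'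
  have hchoose : (N.choose n * n.choose k : ℝ) = N.choose k * (N - k).choose (n - k) := by
    exact_mod_cast Nat.choose_mul hkn
  simp only [poch_neg_natCast]
  have hfac : (k ! : ℝ) ≠ 0 := by positivity
  field_simp
  rw [neg_pow (1 / p)]
  linear_combination (-1) ^ k * x.choose k * (1 / p) ^ k * hchoose

/-- The generating function `∑ₙ C(N,n) Kₙ(x;p,N) tⁿ`; the factor `1 + X - p⁻¹ X` is
`1 - (1-p)/p · X` in a form that needs no `p ≠ 0`. -/
noncomputable def krawGen (p : ℝ) (N x : ℕ) : ℝ[X] := (1 + X - C p⁻¹ * X) ^ x * (1 + X) ^ (N - x)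

theorem krawGen_eq_sum {x N : ℕ} (p : ℝ) (hx : x ≤ N) :
    krawGen p N x =
      ∑ k ∈ range (x + 1), C (x.choose k * (-p⁻¹) ^ k) * (X ^ k * (1 + X) ^ (N - k)) := by
  rw [krawGen, show (1 + X - C p⁻¹ * X : ℝ[X]) = -C p⁻¹ * X + (1 + X) by ring, add_pow, sum_mul]
  refine sum_congr rfl fun k hk => ?_
  have hkx : k ≤ x := Nat.lt_succ_iff.mp (mem_range.mp hk)
  rw [show N - k = (x - k) + (N - x) by omega, pow_add]
  simp only [map_mul, map_pow, map_neg, map_natCast]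
  ring

theorem coeff_krawGen_eq_sum {x N : ℕ} (p : ℝ) (hx : x ≤ N) (n : ℕ) :
    (krawGen p N x).coeff n =
      ∑ k ∈ range (n + 1), x.choose k * (-p⁻¹) ^ k * (N - k).choose (n - k) := by
  simp only [krawGen_eq_sum p hx, finsetSum_coeff, coeff_C_mul, coeff_X_pow_mul',
    coeff_one_add_X_pow, mul_ite, mul_zero]
  rw [← sum_filter]
  refine sum_subset (fun k hk => ?_) fun k hk hkx => ?_
  · simp only [mem_filter, mem_range] at hk ⊢
    omega
  · have hkn := mem_range.mp hk
    have hxk : x < k := by simp only [mem_filter, mem_range] at hkx; omega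
    simp [Nat.choose_eq_zero_of_lt hxk]

theorem coeff_krawGen {x n N : ℕ} (p : ℝ) (hx : x ≤ N) (hn : n ≤ N) :
    (krawGen p N x).coeff n = N.choose n * kraw n x N p := by
  rw [coeff_krawGen_eq_sum p hx, choose_mul_kraw x p hn]

theorem sum_weight_mul_eval_krawGen {p : ℝ} (hp : p ≠ 0) (N : ℕ) (s t : ℝ) :
    ∑ x ∈ range (N + 1), N.choose x * p ^ x * (1 - p) ^ (N - x) *
        ((krawGen p N x).eval s * (krawGen p N x).eval t) =
      (1 + (1 - p) / p * (s * t)) ^ N := by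
  have hterm : ∀ x ∈ range (N + 1),
      N.choose x * p ^ x * (1 - p) ^ (N - x) * ((krawGen p N x).eval s * (krawGen p N x).eval t) =
        (p * (1 + s - p⁻¹ * s) * (1 + t - p⁻¹ * t)) ^ x *
          ((1 - p) * (1 + s) * (1 + t)) ^ (N - x) * N.choose x := by
    intro x _
    simp only [krawGen, eval_mul, eval_pow, eval_sub, eval_add, eval_one, eval_X, eval_C, mul_pow]
    ring
  rw [sum_congr rfl hterm, ← add_pow]
  congr 1
  field_simp
  ring

theorem sum_weight_mul_kraw_mul_kraw {m n N : ℕ} (hm : m ≤ N) (hn : n ≤ N) {p : ℝ} (hp : p ≠ 0) :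
    ∑ x ∈ range (N + 1), N.choose x * p ^ x * (1 - p) ^ (N - x) * kraw m x N p * kraw n x N p =
      if m = n then ((1 - p) / p) ^ n / N.choose n else 0 := by
  set S := ∑ x ∈ range (N + 1),
    N.choose x * p ^ x * (1 - p) ^ (N - x) * kraw m x N p * kraw n x N p
  have hcoeff := sum_coeff_mul_coeff_of_eval_mul (range (N + 1))
    (fun x => C (N.choose x * p ^ x * (1 - p) ^ (N - x)) * krawGen p N x) (krawGen p N)
    (((1 + X) ^ N).comp (C ((1 - p) / p) * X))
    (fun s t => by
      simp only [eval_mul, eval_C, eval_comp, eval_pow, eval_add, eval_one, eval_X, mul_assoc]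
      rw [← sum_weight_mul_eval_krawGen hp N s t]
      exact sum_congr rfl fun x _ => by ring) m n
  have hS : ∑ x ∈ range (N + 1),
      (C (N.choose x * p ^ x * (1 - p) ^ (N - x)) * krawGen p N x).coeff m *
        (krawGen p N x).coeff n = N.choose m * N.choose n * S := by
    rw [mul_sum]
    refine sum_congr rfl fun x hx => ?_
    have hxN : x ≤ N := Nat.lt_succ_iff.mp (mem_range.mp hx)
    rw [coeff_C_mul, coeff_krawGen p hxN hm, coeff_krawGen p hxN hn]
    ring
  rw [hS, comp_C_mul_X_coeff, coeff_one_add_X_pow] at hcoeff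
  have hNm : (N.choose m : ℝ) ≠ 0 := by exact_mod_cast (Nat.choose_pos hm).ne'
  have hNn : (N.choose n : ℝ) ≠ 0 := by exact_mod_cast (Nat.choose_pos hn).ne'
  split_ifs at hcoeff ⊢ with hmn
  · subst hmn
    rw [eq_div_iff hNn]
    exact mul_left_cancel₀ hNm (by linear_combination hcoeff)
  · simpa [hNm, hNn] using hcoeff

/-- Orthogonality of the Krawtchouk polynomials. -/
theorem krawtchouk_orthogonality (m n N : ℕ) (hm : m ≤ N) (hn : n ≤ N)
    (p : ℝ) (hp0 : 0 < p) (hp1 : p < 1) :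
    (N.choose n : ℝ) *
      ∑ X ∈ Finset.range (N + 1),
        (N.choose X : ℝ) * p ^ ((X : ℝ) + n) * (1 - p) ^ ((N : ℝ) - X - n) *
          kraw m X N p * kraw n X N p
    = if m = n then 1 else 0 := by
  have hq : 0 < 1 - p := sub_pos.mpr hp1
  have hsum : ∑ X ∈ range (N + 1), (N.choose X : ℝ) * p ^ ((X : ℝ) + n) *
        (1 - p) ^ ((N : ℝ) - X - n) * kraw m X N p * kraw n X N p =
      (p / (1 - p)) ^ n * ∑ X ∈ range (N + 1),
        N.choose X * p ^ X * (1 - p) ^ (N - X) * kraw m X N p * kraw n X N p := by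
    rw [mul_sum]
    refine sum_congr rfl fun X hX => ?_
    have hXN : X ≤ N := Nat.lt_succ_iff.mp (mem_range.mp hX)
    rw [Real.rpow_add hp0, Real.rpow_sub hq, ← Nat.cast_sub hXN]
    simp only [Real.rpow_natCast]
    rw [div_pow]
    field_simp
  rw [hsum, sum_weight_mul_kraw_mul_kraw hm hn hp0.ne']
  have hNn : (N.choose n : ℝ) ≠ 0 := by exact_mod_cast (Nat.choose_pos hn).ne'
  split_ifs with hmn
  · rw [div_pow, div_pow]
    field_simp
  · ring
end

section
/- In the Lie algebra sl₃ with standard basis e_{ij} (1 ≤ i,j ≤ 3, Σᵢ e_{ii} = 0) and commutation relations [e_{ij}, e_{kl}] = δ_{jk} e_{il} - δ_{il} e_{jk}, define in the universal enveloping algebra J = ¼((e₁₁-e₂₂)² + 2(e₁₁-e₂₂)) + e₂₁e₁₂ and J̄ = ¼((e₁₁-e₃₃)² + 2(e₁₁-e₃₃)) + e₃₁e₁₃. Then the commutator [J, J̄] equals e₃₁e₁₂e₂₃ - e₃₂e₂₁e₁₃. -/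
/-- In `U(sl₃)` (equivalently, in any ℚ-algebra with elements `e i j` satisfying the
`sl₃` defining relations), with `J` and `J̄` the `sl₂` Casimir elements on indices
`{1,2}` and `{1,3}`, one has `[J, J̄] = e₃₁e₁₂e₂₃ - e₃₂e₂₁e₁₃`. -/
theorem sl3_casimir_commutator (A : Type*) [Ring A] [Algebra ℚ A]
    (e : Fin 3 → Fin 3 → A)
    (hcomm : ∀ i j k l : Fin 3,
      e i j * e k l - e k l * e i j
        = (if j = k then e i l else 0) - (if l = i then e k j else 0))
    (hsum : e 0 0 + e 1 1 + e 2 2 = 0) :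
    (let J : A := (1/4 : ℚ) • ((e 0 0 - e 1 1) ^ 2 + 2 * (e 0 0 - e 1 1)) + e 1 0 * e 0 1
     let Jb : A := (1/4 : ℚ) • ((e 0 0 - e 2 2) ^ 2 + 2 * (e 0 0 - e 2 2)) + e 2 0 * e 0 2
     J * Jb - Jb * J = e 2 0 * e 0 1 * e 1 2 - e 2 1 * e 1 0 * e 0 2) := by
  -- extract the needed commutation relations
  have h1 : e 0 1 * e 2 0 - e 2 0 * e 0 1 = -(e 2 1) := by simpa using hcomm 0 1 2 0
  have h2 : e 1 0 * e 2 0 - e 2 0 * e 1 0 = 0 := by simpa using hcomm 1 0 2 0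
  have h3 : e 0 1 * e 0 2 - e 0 2 * e 0 1 = 0 := by simpa using hcomm 0 1 0 2
  have h4 : e 1 0 * e 0 2 - e 0 2 * e 1 0 = e 1 2 := by simpa using hcomm 1 0 0 2
  have h5 : e 1 2 * e 0 1 - e 0 1 * e 1 2 = -(e 0 2) := by simpa using hcomm 1 2 0 1
  have h6 : e 1 0 * e 2 1 - e 2 1 * e 1 0 = -(e 2 0) := by simpa using hcomm 1 0 2 1
  have h7 : e 0 0 * e 2 0 - e 2 0 * e 0 0 = -(e 2 0) := by simpa using hcomm 0 0 2 0
  have h8 : e 1 1 * e 2 0 - e 2 0 * e 1 1 = 0 := by simpa using hcomm 1 1 2 0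
  have h9 : e 0 0 * e 0 2 - e 0 2 * e 0 0 = e 0 2 := by simpa using hcomm 0 0 0 2
  have h10 : e 1 1 * e 0 2 - e 0 2 * e 1 1 = 0 := by simpa using hcomm 1 1 0 2
  have h11 : e 0 0 * e 1 0 - e 1 0 * e 0 0 = -(e 1 0) := by simpa using hcomm 0 0 1 0
  have h12 : e 2 2 * e 1 0 - e 1 0 * e 2 2 = 0 := by simpa using hcomm 2 2 1 0
  have h13 : e 0 0 * e 0 1 - e 0 1 * e 0 0 = e 0 1 := by simpa using hcomm 0 0 0 1
  have h14 : e 2 2 * e 0 1 - e 0 1 * e 2 2 = 0 := by simpa using hcomm 2 2 0 1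
  have d1 : e 0 0 * e 1 1 - e 1 1 * e 0 0 = 0 := by simpa using hcomm 0 0 1 1
  have d2 : e 0 0 * e 2 2 - e 2 2 * e 0 0 = 0 := by simpa using hcomm 0 0 2 2
  have d3 : e 1 1 * e 2 2 - e 2 2 * e 1 1 = 0 := by simpa using hcomm 1 1 2 2
  -- Cartan element commutes with the other Casimir's pieces
  have cH : Commute (e 0 0 - e 1 1) (e 0 0 - e 2 2) := by
    unfold Commute SemiconjBy
    rw [← sub_eq_zero]
    have expand : (e 0 0 - e 1 1) * (e 0 0 - e 2 2) - (e 0 0 - e 2 2) * (e 0 0 - e 1 1)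
        = (e 0 0 * e 1 1 - e 1 1 * e 0 0) - (e 0 0 * e 2 2 - e 2 2 * e 0 0)
          + (e 1 1 * e 2 2 - e 2 2 * e 1 1) := by noncomm_ring
    rw [expand, d1, d2, d3]; simp
  have cA : Commute (e 0 0 - e 1 1) (e 2 0 * e 0 2) := by
    unfold Commute SemiconjBy
    rw [← sub_eq_zero]
    have expand : (e 0 0 - e 1 1) * (e 2 0 * e 0 2) - e 2 0 * e 0 2 * (e 0 0 - e 1 1)
        = ((e 0 0 * e 2 0 - e 2 0 * e 0 0) - (e 1 1 * e 2 0 - e 2 0 * e 1 1)) * e 0 2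
          + e 2 0 * ((e 0 0 * e 0 2 - e 0 2 * e 0 0) - (e 1 1 * e 0 2 - e 0 2 * e 1 1)) := by
      noncomm_ring
    rw [expand, h7, h8, h9, h10]; noncomm_ring
  have cB : Commute (e 0 0 - e 2 2) (e 1 0 * e 0 1) := by
    unfold Commute SemiconjBy
    rw [← sub_eq_zero]
    have expand : (e 0 0 - e 2 2) * (e 1 0 * e 0 1) - e 1 0 * e 0 1 * (e 0 0 - e 2 2)
        = ((e 0 0 * e 1 0 - e 1 0 * e 0 0) - (e 2 2 * e 1 0 - e 1 0 * e 2 2)) * e 0 1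
          + e 1 0 * ((e 0 0 * e 0 1 - e 0 1 * e 0 0) - (e 2 2 * e 0 1 - e 0 1 * e 2 2)) := by
      noncomm_ring
    rw [expand, h11, h12, h13, h14]; noncomm_ring
  -- J's Cartan part commutes with all of Jb
  have cJc : Commute ((1/4 : ℚ) • ((e 0 0 - e 1 1) ^ 2 + 2 * (e 0 0 - e 1 1)))
      ((1/4 : ℚ) • ((e 0 0 - e 2 2) ^ 2 + 2 * (e 0 0 - e 2 2)) + e 2 0 * e 0 2) := by
    have hhJb : Commute (e 0 0 - e 1 1)
        ((1/4 : ℚ) • ((e 0 0 - e 2 2) ^ 2 + 2 * (e 0 0 - e 2 2)) + e 2 0 * e 0 2) := by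
      refine Commute.add_right (Commute.smul_right ?_ _) cA
      refine Commute.add_right (cH.pow_right 2) ?_
      rw [two_mul]; exact cH.add_right cH
    refine Commute.smul_left ?_ _
    refine Commute.add_left (hhJb.pow_left 2) ?_
    rw [two_mul]; exact hhJb.add_left hhJb
  -- Jb's Cartan part commutes with (e 1 0 * e 0 1)
  have cJd : Commute ((1/4 : ℚ) • ((e 0 0 - e 2 2) ^ 2 + 2 * (e 0 0 - e 2 2))) (e 1 0 * e 0 1) := by
    refine Commute.smul_left ?_ _
    refine Commute.add_left (cB.pow_left 2) ?_
    rw [two_mul]; exact cB.add_left cB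
  intro J Jb
  show J * Jb - Jb * J = e 2 0 * e 0 1 * e 1 2 - e 2 1 * e 1 0 * e 0 2
  set K := (1/4 : ℚ) • ((e 0 0 - e 1 1) ^ 2 + 2 * (e 0 0 - e 1 1)) with hK
  set D := (1/4 : ℚ) • ((e 0 0 - e 2 2) ^ 2 + 2 * (e 0 0 - e 2 2)) with hD
  have hJ : J = K + e 1 0 * e 0 1 := rfl
  have hJb : Jb = D + e 2 0 * e 0 2 := rfl
  rw [hJ, hJb]
  have expand : (K + e 1 0 * e 0 1) * (D + e 2 0 * e 0 2)
      - (D + e 2 0 * e 0 2) * (K + e 1 0 * e 0 1)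
      = (K * (D + e 2 0 * e 0 2) - (D + e 2 0 * e 0 2) * K)
        + (e 1 0 * e 0 1 * D - D * (e 1 0 * e 0 1))
        + (e 1 0 * e 0 1 * (e 2 0 * e 0 2) - e 2 0 * e 0 2 * (e 1 0 * e 0 1)) := by noncomm_ring
  rw [expand, cJc.eq, cJd.eq, sub_self, sub_self, zero_add, zero_add]
  -- final normal-ordering computation
  rw [← sub_eq_zero]
  have final : e 1 0 * e 0 1 * (e 2 0 * e 0 2) - e 2 0 * e 0 2 * (e 1 0 * e 0 1)
      - (e 2 0 * e 0 1 * e 1 2 - e 2 1 * e 1 0 * e 0 2)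
      = e 1 0 * ((e 0 1 * e 2 0 - e 2 0 * e 0 1) - -(e 2 1)) * e 0 2
        + ((e 1 0 * e 2 0 - e 2 0 * e 1 0) - 0) * (e 0 1 * e 0 2)
        + e 2 0 * e 1 0 * ((e 0 1 * e 0 2 - e 0 2 * e 0 1) - 0)
        + e 2 0 * ((e 1 0 * e 0 2 - e 0 2 * e 1 0) - e 1 2) * e 0 1
        + e 2 0 * ((e 1 2 * e 0 1 - e 0 1 * e 1 2) - -(e 0 2))
        - ((e 1 0 * e 2 1 - e 2 1 * e 1 0) - -(e 2 0)) * e 0 2 := by noncomm_ring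
  rw [final, h1, h2, h3, h4, h5, h6]
  simp
end

section
/- The Racah polynomial contiguity relation (equation (4.13) of Wilson): (n+γ)(n-γ+α+β+1) R̃_n(x;α,β,γ,δ) = [γ/(2x+γ+δ+1)] [ (x+α+1)(x+β+δ+1) R̃_n(x+1;α,β,γ-1,δ) - (x-α+γ+δ)(x-β+γ) R̃_n(x;α,β,γ-1,δ) ], where R̃_n(x;α,β,γ,δ) = ₄F₃(-n, n+α+β+1, -x, x+γ+δ+1; α+1, β+δ+1, γ+1; 1) is the terminating Racah polynomial. -/
open Finset

/-- The Racah polynomial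
`R̃_n(x;α,β,γ,δ) = ₄F₃(-n, n+α+β+1, -x, x+γ+δ+1; α+1, β+δ+1, γ+1; 1)`. -/
noncomputable def racah (n : ℕ) (x α β γ δ : ℝ) : ℝ :=
  ∑ k ∈ Finset.range (n + 1),
    poch (-(n : ℝ)) k * poch ((n : ℝ) + α + β + 1) k * poch (-x) k *
        poch (x + γ + δ + 1) k /
      (poch (α + 1) k * poch (β + δ + 1) k * poch (γ + 1) k * (Nat.factorial k : ℝ))

lemma poch_zero (a : ℝ) : poch a 0 = 1 := by simp [poch]

lemma poch_succ (a : ℝ) (k : ℕ) : poch a (k + 1) = poch a k * (a + k) :=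
  Finset.prod_range_succ _ _

lemma poch_succ' (a : ℝ) (k : ℕ) : poch a (k + 1) = a * poch (a + 1) k := by
  rw [poch, Finset.prod_range_succ', poch]
  simp only [Nat.cast_zero, add_zero]
  rw [mul_comm]
  congr 1
  exact Finset.prod_congr rfl fun i _ => by push_cast; ring

lemma poch_neg_nat_s18 (n : ℕ) : poch (-(n : ℝ)) (n + 1) = 0 := by
  apply Finset.prod_eq_zero (Finset.self_mem_range_succ n)
  simp

/-- Telescoping auxiliary sequence for Wilson's contiguity relation. -/
noncomputable def waux (n : ℕ) (x α β γ δ : ℝ) : ℕ → ℝ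
  | 0 => 0
  | (j + 1) =>
      (2 * x + γ + δ + 1) * poch (-(n : ℝ)) (j + 1) * poch ((n : ℝ) + α + β + 1) (j + 1) *
        (poch (-x) j * poch (x + γ + δ + 1) j /
          (poch (α + 1) j * poch (β + δ + 1) j * poch (γ + 1) j * (Nat.factorial j : ℝ)))

lemma waux_top (n : ℕ) (x α β γ δ : ℝ) : waux n x α β γ δ (n + 1) = 0 := by
  rw [waux, poch_neg_nat_s18]
  ring

lemma term_zero (n : ℕ) (x α β γ δ : ℝ) :
    γ * ((x + α + 1) * (x + β + δ + 1) *
          (poch (-(n : ℝ)) 0 * poch ((n : ℝ) + α + β + 1) 0 * poch (-(x + 1)) 0 *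
              poch (x + 1 + (γ - 1) + δ + 1) 0 /
            (poch (α + 1) 0 * poch (β + δ + 1) 0 * poch (γ - 1 + 1) 0 *
              (Nat.factorial 0 : ℝ)))
        - (x - α + γ + δ) * (x - β + γ) *
          (poch (-(n : ℝ)) 0 * poch ((n : ℝ) + α + β + 1) 0 * poch (-x) 0 *
              poch (x + (γ - 1) + δ + 1) 0 /
            (poch (α + 1) 0 * poch (β + δ + 1) 0 * poch (γ - 1 + 1) 0 *
              (Nat.factorial 0 : ℝ))))
      - (2 * x + γ + δ + 1) * ((n : ℝ) + γ) * ((n : ℝ) - γ + α + β + 1) *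
          (poch (-(n : ℝ)) 0 * poch ((n : ℝ) + α + β + 1) 0 * poch (-x) 0 *
              poch (x + γ + δ + 1) 0 /
            (poch (α + 1) 0 * poch (β + δ + 1) 0 * poch (γ + 1) 0 *
              (Nat.factorial 0 : ℝ)))
      = waux n x α β γ δ (0 + 1) - waux n x α β γ δ 0 := by
  simp only [poch_zero, waux, zero_add, Nat.factorial_zero, Nat.cast_one, poch_succ,
    Nat.cast_zero, add_zero]
  ring

lemma plumbing (g k1 k1' k2 k2' k3 k3' c b3 c3 p1 m1 p2 m2 p3 p4 w1 w2 q1 q2 q3 fF a1 a2 g1 s m1' m2' : ℝ)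
    (hq1 : q1 ≠ 0) (hq2 : q2 ≠ 0) (hq3 : q3 ≠ 0) (hf : fF ≠ 0) (hg : g ≠ 0)
    (ha1 : a1 ≠ 0) (ha2 : a2 ≠ 0) (hg1 : g1 ≠ 0) (hs : s ≠ 0)
    (hcore : k1 * k1' * b3 * w2 * g1 - k2 * k2' * w1 * c3 * g1 - c * k3 * k3' * w1 * w2
      = c * (m1' * m2' * w1 * w2 - a1 * a2 * g1 * s)) :
    g * (k1 * k1' * (p1 * m1 * (p2 * m2) * (b3 * p3) * (p4 * w2) /
            (q1 * a1 * (q2 * a2) * (g * q3) * (s * fF)))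
        - k2 * k2' * (p1 * m1 * (p2 * m2) * (p3 * w1) * (c3 * p4) /
            (q1 * a1 * (q2 * a2) * (g * q3) * (s * fF))))
      - c * k3 * k3' * (p1 * m1 * (p2 * m2) * (p3 * w1) * (p4 * w2) /
          (q1 * a1 * (q2 * a2) * (q3 * g1) * (s * fF)))
      = c * (p1 * m1 * m1') * (p2 * m2 * m2') * (p3 * w1 * (p4 * w2) /
            (q1 * a1 * (q2 * a2) * (q3 * g1) * (s * fF)))
        - c * (p1 * m1) * (p2 * m2) * (p3 * p4 / (q1 * q2 * q3 * fF)) := by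
  have F1 : g * (p1 * m1 * (p2 * m2) * (b3 * p3) * (p4 * w2) /
      (q1 * a1 * (q2 * a2) * (g * q3) * (s * fF)))
      = b3 * w2 * g1 * (p1 * m1 * (p2 * m2) * p3 * p4 /
          (q1 * a1 * (q2 * a2) * (q3 * g1) * (s * fF))) := by
    field_simp
  have F2 : g * (p1 * m1 * (p2 * m2) * (p3 * w1) * (c3 * p4) /
      (q1 * a1 * (q2 * a2) * (g * q3) * (s * fF)))
      = w1 * c3 * g1 * (p1 * m1 * (p2 * m2) * p3 * p4 /
          (q1 * a1 * (q2 * a2) * (q3 * g1) * (s * fF))) := by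
    field_simp
  have F5 : p3 * p4 / (q1 * q2 * q3 * fF)
      = a1 * a2 * g1 * s * (p3 * p4) / (q1 * a1 * (q2 * a2) * (q3 * g1) * (s * fF)) := by
    field_simp
  linear_combination k1 * k1' * F1 - k2 * k2' * F2 + c * (p1 * m1) * (p2 * m2) * F5 +
    (p1 * m1 * (p2 * m2) * p3 * p4 / (q1 * a1 * (q2 * a2) * (q3 * g1) * (s * fF))) * hcore

set_option maxHeartbeats 1000000 in
lemma core_identity (x α β γ δ t u : ℝ) :
    (x + α + 1) * (x + β + δ + 1) * (-(x + 1)) * (x + γ + δ + 1 + t) * (γ + 1 + t)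
      - (x - α + γ + δ) * (x - β + γ) * (-x + t) * (x + γ + δ) * (γ + 1 + t)
      - (2 * x + γ + δ + 1) * (u + γ) * (u - γ + α + β + 1) * (-x + t) * (x + γ + δ + 1 + t)
      = (2 * x + γ + δ + 1) * ((-u + (t + 1)) * (u + α + β + 1 + (t + 1)) * (-x + t) *
            (x + γ + δ + 1 + t)
          - (α + 1 + t) * (β + δ + 1 + t) * (γ + 1 + t) * (t + 1)) := by
  ring

set_option maxHeartbeats 1000000 in
lemma term_succ (n j : ℕ) (x α β γ δ : ℝ) (hγ0 : γ ≠ 0)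
    (hA : poch (α + 1) j ≠ 0) (hA' : α + 1 + j ≠ 0)
    (hB : poch (β + δ + 1) j ≠ 0) (hB' : β + δ + 1 + j ≠ 0)
    (hG : poch (γ + 1) j ≠ 0) (hG' : γ + 1 + j ≠ 0) :
    γ * ((x + α + 1) * (x + β + δ + 1) *
          (poch (-(n : ℝ)) (j + 1) * poch ((n : ℝ) + α + β + 1) (j + 1) *
              poch (-(x + 1)) (j + 1) * poch (x + 1 + (γ - 1) + δ + 1) (j + 1) /
            (poch (α + 1) (j + 1) * poch (β + δ + 1) (j + 1) * poch (γ - 1 + 1) (j + 1) *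
              (Nat.factorial (j + 1) : ℝ)))
        - (x - α + γ + δ) * (x - β + γ) *
          (poch (-(n : ℝ)) (j + 1) * poch ((n : ℝ) + α + β + 1) (j + 1) * poch (-x) (j + 1) *
              poch (x + (γ - 1) + δ + 1) (j + 1) /
            (poch (α + 1) (j + 1) * poch (β + δ + 1) (j + 1) * poch (γ - 1 + 1) (j + 1) *
              (Nat.factorial (j + 1) : ℝ))))
      - (2 * x + γ + δ + 1) * ((n : ℝ) + γ) * ((n : ℝ) - γ + α + β + 1) *
          (poch (-(n : ℝ)) (j + 1) * poch ((n : ℝ) + α + β + 1) (j + 1) * poch (-x) (j + 1) *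
              poch (x + γ + δ + 1) (j + 1) /
            (poch (α + 1) (j + 1) * poch (β + δ + 1) (j + 1) * poch (γ + 1) (j + 1) *
              (Nat.factorial (j + 1) : ℝ)))
      = waux n x α β γ δ (j + 1 + 1) - waux n x α β γ δ (j + 1) := by
  have e1 : poch (-(x + 1)) (j + 1) = -(x + 1) * poch (-x) j := by
    rw [poch_succ']; congr 2; ring
  have e2 : poch (x + 1 + (γ - 1) + δ + 1) (j + 1) = poch (x + γ + δ + 1) j *
      (x + γ + δ + 1 + j) := by
    have h : x + 1 + (γ - 1) + δ + 1 = x + γ + δ + 1 := by ring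
    rw [h, poch_succ]
  have e3 : poch (γ - 1 + 1) (j + 1) = γ * poch (γ + 1) j := by
    have h : γ - 1 + 1 = γ := by ring
    rw [h, poch_succ']
  have e4 : poch (x + (γ - 1) + δ + 1) (j + 1) = (x + γ + δ) * poch (x + γ + δ + 1) j := by
    have h : x + (γ - 1) + δ + 1 = x + γ + δ := by ring
    have h2 : x + γ + δ + 1 = (x + γ + δ) + 1 := by ring
    rw [h, poch_succ', ← h2]
  have ef : (Nat.factorial (j + 1) : ℝ) = ((j : ℝ) + 1) * (Nat.factorial j : ℝ) := by
    rw [Nat.factorial_succ]; push_cast; ring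
  have hf : (Nat.factorial j : ℝ) ≠ 0 := Nat.cast_ne_zero.mpr (Nat.factorial_ne_zero j)
  have hj1 : ((j : ℝ) + 1) ≠ 0 := by positivity
  rw [waux, waux, e1, e2, e3, e4, ef, poch_succ (-(n : ℝ)) (j + 1),
    poch_succ ((n : ℝ) + α + β + 1) (j + 1), poch_succ (-(n : ℝ)) j,
    poch_succ ((n : ℝ) + α + β + 1) j, poch_succ (-x) j, poch_succ (x + γ + δ + 1) j,
    poch_succ (α + 1) j, poch_succ (β + δ + 1) j, poch_succ (γ + 1) j]
  push_cast
  have hp := plumbing γ (x + α + 1) (x + β + δ + 1) (x - α + γ + δ) (x - β + γ)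
    ((n : ℝ) + γ) ((n : ℝ) - γ + α + β + 1) (2 * x + γ + δ + 1) (-(x + 1)) (x + γ + δ)
    (poch (-(n : ℝ)) j) (-(n : ℝ) + j) (poch ((n : ℝ) + α + β + 1) j) ((n : ℝ) + α + β + 1 + j)
    (poch (-x) j) (poch (x + γ + δ + 1) j) (-x + j) (x + γ + δ + 1 + j)
    (poch (α + 1) j) (poch (β + δ + 1) j) (poch (γ + 1) j) (Nat.factorial j : ℝ)
    (α + 1 + j) (β + δ + 1 + j) (γ + 1 + j) ((j : ℝ) + 1)
    (-(n : ℝ) + ((j : ℝ) + 1)) ((n : ℝ) + α + β + 1 + ((j : ℝ) + 1))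
    hA hB hG hf hγ0 hA' hB' hG' hj1
    (core_identity x α β γ δ (j : ℝ) (n : ℝ))
  exact hp

/-- Wilson's contiguity relation (equation (4.13)) for the Racah polynomials. -/
theorem racah_contiguity_wilson (n : ℕ) (x α β γ δ : ℝ)
    (hx : 2 * x + γ + δ + 1 ≠ 0)
    (hα : ∀ k ≤ n, poch (α + 1) k ≠ 0)
    (hβδ : ∀ k ≤ n, poch (β + δ + 1) k ≠ 0)
    (hγ : ∀ k ≤ n, poch γ k ≠ 0)
    (hγ' : ∀ k ≤ n, poch (γ + 1) k ≠ 0) :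
    ((n : ℝ) + γ) * ((n : ℝ) - γ + α + β + 1) * racah n x α β γ δ
      = γ / (2 * x + γ + δ + 1) *
          ((x + α + 1) * (x + β + δ + 1) * racah n (x + 1) α β (γ - 1) δ
            - (x - α + γ + δ) * (x - β + γ) * racah n x α β (γ - 1) δ) := by
  rw [div_mul_eq_mul_div, eq_div_iff hx, ← sub_eq_zero]
  have key : ∀ k ∈ Finset.range (n + 1),
      γ * ((x + α + 1) * (x + β + δ + 1) *
            (poch (-(n : ℝ)) k * poch ((n : ℝ) + α + β + 1) k * poch (-(x + 1)) k *
                poch (x + 1 + (γ - 1) + δ + 1) k /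
              (poch (α + 1) k * poch (β + δ + 1) k * poch (γ - 1 + 1) k *
                (Nat.factorial k : ℝ)))
          - (x - α + γ + δ) * (x - β + γ) *
            (poch (-(n : ℝ)) k * poch ((n : ℝ) + α + β + 1) k * poch (-x) k *
                poch (x + (γ - 1) + δ + 1) k /
              (poch (α + 1) k * poch (β + δ + 1) k * poch (γ - 1 + 1) k *
                (Nat.factorial k : ℝ))))
        - (2 * x + γ + δ + 1) * ((n : ℝ) + γ) * ((n : ℝ) - γ + α + β + 1) *
            (poch (-(n : ℝ)) k * poch ((n : ℝ) + α + β + 1) k * poch (-x) k *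
                poch (x + γ + δ + 1) k /
              (poch (α + 1) k * poch (β + δ + 1) k * poch (γ + 1) k *
                (Nat.factorial k : ℝ)))
        = waux n x α β γ δ (k + 1) - waux n x α β γ δ k := by
    intro k hk
    rw [Finset.mem_range, Nat.lt_succ_iff] at hk
    cases k with
    | zero => exact term_zero n x α β γ δ
    | succ j =>
        have h1j : 1 ≤ n := le_trans (Nat.le_add_left 1 j) hk
        have hγ0 : γ ≠ 0 := by
          have := hγ 1 h1j
          rwa [show (1 : ℕ) = 0 + 1 from rfl, poch_succ, poch_zero, Nat.cast_zero, add_zero,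
            one_mul] at this
        have hjn : j ≤ n := le_trans (Nat.le_succ j) hk
        have hA := hα (j + 1) hk
        rw [poch_succ] at hA
        have hB := hβδ (j + 1) hk
        rw [poch_succ] at hB
        have hG := hγ' (j + 1) hk
        rw [poch_succ] at hG
        exact term_succ n j x α β γ δ hγ0
          (left_ne_zero_of_mul hA) (by push_cast at hA ⊢; exact right_ne_zero_of_mul hA)
          (left_ne_zero_of_mul hB) (by push_cast at hB ⊢; exact right_ne_zero_of_mul hB)
          (left_ne_zero_of_mul hG) (by push_cast at hG ⊢; exact right_ne_zero_of_mul hG)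
  calc ((n : ℝ) + γ) * ((n : ℝ) - γ + α + β + 1) * racah n x α β γ δ * (2 * x + γ + δ + 1)
        - γ * ((x + α + 1) * (x + β + δ + 1) * racah n (x + 1) α β (γ - 1) δ
            - (x - α + γ + δ) * (x - β + γ) * racah n x α β (γ - 1) δ)
      = -∑ k ∈ Finset.range (n + 1),
          (waux n x α β γ δ (k + 1) - waux n x α β γ δ k) := by
        rw [← Finset.sum_congr rfl key]
        simp only [racah, Finset.sum_mul, Finset.mul_sum, ← Finset.sum_sub_distrib,
          ← Finset.sum_neg_distrib]
        refine Finset.sum_congr rfl fun k _ => ?_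
        ring
    _ = 0 := by
        rw [Finset.sum_range_sub (waux n x α β γ δ), waux_top, waux]
        ring
end

section
/- The four-term Racah mixed recurrence-difference relation: 0 = [n/(2n+α+β)] R̃_{n-1}(x;α,β,γ,δ) + [(n+α+β)/(2n+α+β)] R̃_n(x;α,β,γ,δ) - [x/(2x+γ+δ+1)] R̃_n(x-1;α,β-1,γ,δ+1) - [(x+γ+δ+1)/(2x+γ+δ+1)] R̃_n(x;α,β-1,γ,δ+1), where R̃_n(x;α,β,γ,δ) = ₄F₃(-n, n+α+β+1, -x, x+γ+δ+1; α+1, β+δ+1, γ+1; 1) is a terminating hypergeometric sum. -/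
/-!
The first two and the last two terms of the relation are both equal to the terminating ₄F₃-sum
`∑ₖ (-n)ₖ (n+α+β)ₖ (-x)ₖ (x+γ+δ+1)ₖ / ((α+1)ₖ (β+δ+1)ₖ (γ+1)ₖ k!)`:
the first pair by contiguity in the numerator pair `(-n, n+α+β)`, the second pair
by contiguity in `(-x, x+γ+δ+1)`. Termwise, contiguity is
`p (1-p)ₖ (q)ₖ + q (-p)ₖ (q+1)ₖ = (p+q) (-p)ₖ (q)ₖ`, from `a (a+1)ₖ = (a)ₖ (a+k)`.
-/

open Finset

lemma mul_poch_add_one (a : ℝ) (k : ℕ) : a * poch (a + 1) k = poch a k * (a + k) := by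
  rw [← poch_succ', poch_succ]

lemma poch_neg_natCast_succ (m : ℕ) : poch (-(m : ℝ)) (m + 1) = 0 :=
  prod_eq_zero (self_mem_range_succ m) (neg_add_cancel _)

lemma poch_contiguous (p q : ℝ) (k : ℕ) :
    p * poch (1 - p) k * poch q k + q * poch (-p) k * poch (q + 1) k
      = (p + q) * (poch (-p) k * poch q k) := by
  have hp := mul_poch_add_one (-p) k
  have hq := mul_poch_add_one q k
  rw [neg_add_eq_sub] at hp
  linear_combination (-poch q k) * hp + poch (-p) k * hq

/-- The partial sum up to `k = N` of `₄F₃(a, b, c, d; e, f, g; 1)`. -/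
noncomputable def partialHypergeom43 (a b c d e f g : ℝ) (N : ℕ) : ℝ :=
  ∑ k ∈ range (N + 1),
    poch a k * poch b k * poch c k * poch d k / (poch e k * poch f k * poch g k * k.factorial)

namespace partialHypergeom43

variable (a b c d e f g : ℝ) (N : ℕ)

lemma comm_pairs :
    partialHypergeom43 a b c d e f g N = partialHypergeom43 c d a b e f g N := by
  unfold partialHypergeom43
  exact sum_congr rfl fun k _ ↦ by ring

lemma succ_of_poch_eq_zero (h : poch a (N + 1) = 0) :
    partialHypergeom43 a b c d e f g (N + 1) = partialHypergeom43 a b c d e f g N := by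
  rw [partialHypergeom43, sum_range_succ, h]
  simp [partialHypergeom43]

variable (p q : ℝ)

lemma contiguous_left (hpq : p + q ≠ 0) :
    p / (p + q) * partialHypergeom43 (1 - p) q c d e f g N
        + q / (p + q) * partialHypergeom43 (-p) (q + 1) c d e f g N
      = partialHypergeom43 (-p) q c d e f g N := by
  simp only [partialHypergeom43, mul_sum, ← sum_add_distrib]
  refine sum_congr rfl fun k _ ↦ ?_
  have hr := poch_contiguous p q k
  linear_combination
    poch c k * poch d k / (poch e k * poch f k * poch g k * k.factorial) / (p + q) * hr
      + poch (-p) k * poch q k * poch c k * poch d k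
        / (poch e k * poch f k * poch g k * k.factorial) * div_self hpq

lemma contiguous_right (hpq : p + q ≠ 0) :
    p / (p + q) * partialHypergeom43 a b (1 - p) q e f g N
        + q / (p + q) * partialHypergeom43 a b (-p) (q + 1) e f g N
      = partialHypergeom43 a b (-p) q e f g N := by
  simp only [comm_pairs a b]
  exact contiguous_left a b e f g N p q hpq

end partialHypergeom43

lemma racah_eq_partialHypergeom43 (n : ℕ) (x α β γ δ : ℝ) :
    racah n x α β γ δ = partialHypergeom43 (-n) (n + α + β + 1) (-x) (x + γ + δ + 1)
      (α + 1) (β + δ + 1) (γ + 1) n :=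
  rfl

lemma racah_pred_eq_partialHypergeom43 (n : ℕ) (x α β γ δ : ℝ) :
    racah (n - 1) x α β γ δ = partialHypergeom43 (1 - n) (n + α + β) (-x) (x + γ + δ + 1)
      (α + 1) (β + δ + 1) (γ + 1) n := by
  -- at `n = 0` the truncated `n - 1` is `0`, and both sides are `1`
  cases n with
  | zero => simp [racah, partialHypergeom43, poch]
  | succ m =>
    have h1 : (1 : ℝ) - (m + 1 : ℕ) = -m := by push_cast; ring
    have h2 : ((m + 1 : ℕ) : ℝ) + α + β = m + α + β + 1 := by push_cast; ring
    rw [h1, h2, partialHypergeom43.succ_of_poch_eq_zero _ _ _ _ _ _ _ _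
      (poch_neg_natCast_succ m)]
    rfl

theorem racah_four_term_relation_general (n : ℕ) (x α β γ δ : ℝ)
    (hn : 2 * (n : ℝ) + α + β ≠ 0) (hx : 2 * x + γ + δ + 1 ≠ 0) :
    0 = (n : ℝ) / (2 * (n : ℝ) + α + β) * racah (n - 1) x α β γ δ
        + ((n : ℝ) + α + β) / (2 * (n : ℝ) + α + β) * racah n x α β γ δ
        - x / (2 * x + γ + δ + 1) * racah n (x - 1) α (β - 1) γ (δ + 1)
        - (x + γ + δ + 1) / (2 * x + γ + δ + 1) * racah n x α (β - 1) γ (δ + 1) := by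
  have hn' : (n : ℝ) + (n + α + β) ≠ 0 := by convert hn using 1; ring
  have hx' : x + (x + γ + δ + 1) ≠ 0 := by convert hx using 1; ring
  have h₁ := partialHypergeom43.contiguous_left (-x) (x + γ + δ + 1) (α + 1) (β + δ + 1) (γ + 1)
    n n (n + α + β) hn'
  have h₂ := partialHypergeom43.contiguous_right (-n) (n + α + β) (α + 1) (β + δ + 1) (γ + 1)
    n x (x + γ + δ + 1) hx'
  rw [racah_pred_eq_partialHypergeom43, racah_eq_partialHypergeom43,
    racah_eq_partialHypergeom43, racah_eq_partialHypergeom43]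
  ring_nf at h₁ h₂ ⊢
  linear_combination h₂ - h₁

/-- The four-term mixed recurrence-difference relation for the Racah polynomials. -/
theorem racah_four_term_relation (n : ℕ) (x α β γ δ : ℝ)
    (hn : 2 * (n : ℝ) + α + β ≠ 0) (hx : 2 * x + γ + δ + 1 ≠ 0)
    (hα : ∀ k ≤ n, poch (α + 1) k ≠ 0)
    (hβδ : ∀ k ≤ n, poch (β + δ + 1) k ≠ 0)
    (hγ : ∀ k ≤ n, poch (γ + 1) k ≠ 0) :
    0 = (n : ℝ) / (2 * (n : ℝ) + α + β) * racah (n - 1) x α β γ δ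
        + ((n : ℝ) + α + β) / (2 * (n : ℝ) + α + β) * racah n x α β γ δ
        - x / (2 * x + γ + δ + 1) * racah n (x - 1) α (β - 1) γ (δ + 1)
        - (x + γ + δ + 1) / (2 * x + γ + δ + 1) * racah n x α (β - 1) γ (δ + 1) :=
  racah_four_term_relation_general n x α β γ δ hn hx
end
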